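/- arXiv:2010.03390 — 4 statements merged into one kernel-verified Lean document; each statement's English description precedes it below -/
import Mathlib

section
/- Let U, Z, A be random variables on a probability space with Z, A taking values in {−1, 1}, and let Y₁, Y₋₁ be integrable real random variables (potential outcomes). Suppose Z ⟂ U, and (Y₁, Y₋₁) ⟂ (Z, A) given U, and Y = Y₁·1{A=1} + Y₋₁·1{A=−1}. Then E[Y | Z = 1] − E[Y | Z = −1] = E[ γ̃(U) · δ̃(U) ], where γ̃(U) := E[Y₁ − Y₋₁ | U] and δ̃(U) := P(A = 1 | Z = 1, U) − P(A = 1 | Z = −1, U). -/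
/-!
Split `E[Y; Z = z]` along `A` and along the finitely many values of `U`. Given `U = u`, the
law of `(Y₁, Y₋₁)` on `{Z = z, A = a}` is proportional to its law on `{U = u}`, so
`E[Y_a; Z = z, A = a, U = u] = E[Y_a; U = u] · P(Z = z, A = a, U = u) / P(U = u)`.
As `A = ±1` and `Z ⟂ U`, `P(Z = z, A = -1, U = u) = P(Z = z) P(U = u) - P(Z = z, A = 1, U = u)`,
which gives `E[Y | Z = z] = ∑ᵤ (E[Y₋₁; U = u] + γ̃(u) P(A = 1 | Z = z, U = u) P(U = u))`.
The first summand does not depend on `z` and cancels in the difference.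
-/

open MeasureTheory Finset

section
variable {Ω : Type*} [MeasurableSpace Ω] {μ : Measure Ω}

theorem setIntegral_comp_mul_measureReal_eq_of_proportional [IsFiniteMeasure μ]
    {β : Type*} [MeasurableSpace β] {V : Ω → β} (hV : AEMeasurable V μ) {g : β → ℝ}
    (hg : Measurable g) {S T : Set Ω} (hS : MeasurableSet S) (hT : MeasurableSet T)
    (h : ∀ B, MeasurableSet B →
      μ.real (V ⁻¹' B ∩ S) * μ.real T = μ.real (V ⁻¹' B ∩ T) * μ.real S) :
    (∫ ω in S, g (V ω) ∂μ) * μ.real T = (∫ ω in T, g (V ω) ∂μ) * μ.real S := by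
  have hlaw : μ T • (μ.restrict S).map V = μ S • (μ.restrict T).map V := by
    ext B hB
    simp only [Measure.smul_apply, smul_eq_mul, Measure.map_apply_of_aemeasurable hV.restrict hB,
      Measure.restrict_apply' hS, Measure.restrict_apply' hT]
    rw [← ENNReal.toReal_eq_toReal_iff' (by finiteness) (by finiteness), ENNReal.toReal_mul,
      ENNReal.toReal_mul]
    simp only [← measureReal_def]
    linarith [h B hB]
  have := congrArg (fun ν => ∫ b, g b ∂ν) hlaw
  simp only [integral_smul_measure, smul_eq_mul,
    integral_map hV.restrict hg.aestronglyMeasurable, ← measureReal_def] at this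
  linarith

theorem setIntegral_eq_sum_setIntegral_fiber {𝒰 : Type*} [Fintype 𝒰] {U : Ω → 𝒰}
    (hU : ∀ u, MeasurableSet {ω | U ω = u}) {f : Ω → ℝ} {s : Set Ω} (hf : IntegrableOn f s μ) :
    ∫ ω in s, f ω ∂μ = ∑ u, ∫ ω in s ∩ {ω | U ω = u}, f ω ∂μ := by
  have hcover : (⋃ u, {ω | U ω = u}) = Set.univ :=
    Set.iUnion_eq_univ_iff.2 fun ω => ⟨U ω, rfl⟩
  calc ∫ ω in s, f ω ∂μ = ∫ ω in ⋃ u, {ω | U ω = u}, f ω ∂μ.restrict s := by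
        rw [hcover, Measure.restrict_univ]
    _ = ∑ u, ∫ ω in {ω | U ω = u}, f ω ∂μ.restrict s :=
        integral_iUnion_fintype hU (pairwise_disjoint_fiber U) fun _ => Integrable.restrict hf
    _ = ∑ u, ∫ ω in s ∩ {ω | U ω = u}, f ω ∂μ := by
        simp_rw [Measure.restrict_restrict (hU _), Set.inter_comm _ s]

theorem setIntegral_eq_add_of_consistency {A Y1 Ym1 Y : Ω → ℝ} (hA : Measurable A)
    (hY1 : Integrable Y1 μ) (hYm1 : Integrable Ym1 μ)
    (hY : ∀ ω, Y ω = Y1 ω * (if A ω = 1 then 1 else 0) + Ym1 ω * (if A ω = -1 then 1 else 0))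
    (s : Set Ω) :
    ∫ ω in s, Y ω ∂μ =
      ∫ ω in s ∩ {ω | A ω = 1}, Y1 ω ∂μ + ∫ ω in s ∩ {ω | A ω = -1}, Ym1 ω ∂μ := by
  have hA1 : MeasurableSet {ω | A ω = 1} := hA (measurableSet_singleton 1)
  have hAm1 : MeasurableSet {ω | A ω = -1} := hA (measurableSet_singleton (-1))
  have hY' : ∀ ω, Y ω = {ω | A ω = 1}.indicator Y1 ω + {ω | A ω = -1}.indicator Ym1 ω := by
    simp [hY, Set.indicator_apply]
  simp only [hY']
  rw [integral_add (hY1.indicator hA1).integrableOn (hYm1.indicator hAm1).integrableOn,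
    setIntegral_indicator hA1, setIntegral_indicator hAm1]

theorem measureReal_inter_add_inter_of_eq_one_or_eq_neg_one [IsFiniteMeasure μ] {A : Ω → ℝ}
    (hA : Measurable A) (hApm : ∀ ω, A ω = 1 ∨ A ω = -1) (s : Set Ω) :
    μ.real (s ∩ {ω | A ω = 1}) + μ.real (s ∩ {ω | A ω = -1}) = μ.real s := by
  rw [show s ∩ {ω | A ω = -1} = s \ {ω | A ω = 1} by
    ext ω
    rcases hApm ω with h | h <;> simp [h] <;> norm_num]
  exact measureReal_inter_add_sdiff
    (show MeasurableSet {ω | A ω = 1} from hA (measurableSet_singleton 1))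

theorem setIntegral_div_measureReal_eq_sum_of_latent_unconfoundedness [IsFiniteMeasure μ]
    {𝒰 : Type*} [Fintype 𝒰]
    {A Y1 Ym1 Y : Ω → ℝ} {U : Ω → 𝒰} (hA : Measurable A) (hApm : ∀ ω, A ω = 1 ∨ A ω = -1)
    (hU : ∀ u, MeasurableSet {ω | U ω = u}) (hY1 : Integrable Y1 μ) (hYm1 : Integrable Ym1 μ)
    (hY : ∀ ω, Y ω = Y1 ω * (if A ω = 1 then 1 else 0) + Ym1 ω * (if A ω = -1 then 1 else 0))
    {S : Set Ω} (hS : MeasurableSet S) (hSU : ∀ u, 0 < μ.real (S ∩ {ω | U ω = u}))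
    (hindep : ∀ u, μ.real (S ∩ {ω | U ω = u}) = μ.real S * μ.real {ω | U ω = u})
    -- nested so that `{ω | Z ω = z ∧ A ω = a ∧ U ω = u}` is `S ∩ ({A = a} ∩ {U = u})` by `rfl`
    (hlatent : ∀ B : Set (ℝ × ℝ), MeasurableSet B → ∀ (a : ℝ) (u : 𝒰),
      μ.real ((fun ω => (Y1 ω, Ym1 ω)) ⁻¹' B ∩ (S ∩ ({ω | A ω = a} ∩ {ω | U ω = u}))) *
          μ.real {ω | U ω = u} =
        μ.real ((fun ω => (Y1 ω, Ym1 ω)) ⁻¹' B ∩ {ω | U ω = u}) *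
          μ.real (S ∩ ({ω | A ω = a} ∩ {ω | U ω = u}))) :
    (∫ ω in S, Y ω ∂μ) / μ.real S =
      ∑ u, (∫ ω in {ω | U ω = u}, Ym1 ω ∂μ +
        (∫ ω in {ω | U ω = u}, (Y1 ω - Ym1 ω) ∂μ) / μ.real {ω | U ω = u} *
          (μ.real ({ω | A ω = 1} ∩ (S ∩ {ω | U ω = u})) / μ.real (S ∩ {ω | U ω = u})) *
          μ.real {ω | U ω = u}) := by
  rw [setIntegral_eq_add_of_consistency hA hY1 hYm1 hY,
    setIntegral_eq_sum_setIntegral_fiber hU hY1.integrableOn,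
    setIntegral_eq_sum_setIntegral_fiber hU hYm1.integrableOn, ← sum_add_distrib, sum_div]
  refine sum_congr rfl fun u _ => ?_
  have hE (a : ℝ) : MeasurableSet (S ∩ ({ω | A ω = a} ∩ {ω | U ω = u})) :=
    hS.inter ((hA (measurableSet_singleton a)).inter (hU u))
  have hV : AEMeasurable (fun ω => (Y1 ω, Ym1 ω)) μ := hY1.aemeasurable.prodMk hYm1.aemeasurable
  have h1 := setIntegral_comp_mul_measureReal_eq_of_proportional hV measurable_fst (hE 1) (hU u)
    fun B hB => hlatent B hB 1 u
  have h0 := setIntegral_comp_mul_measureReal_eq_of_proportional hV measurable_snd (hE (-1)) (hU u)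
    fun B hB => hlatent B hB (-1) u
  have hcount := measureReal_inter_add_inter_of_eq_one_or_eq_neg_one (μ := μ) hA hApm
    (S ∩ {ω | U ω = u})
  simp only [Set.inter_right_comm S {ω | U ω = u}, Set.inter_assoc, hindep u] at hcount
  obtain ⟨hq, hp⟩ := mul_ne_zero_iff.1 (hindep u ▸ (hSU u).ne')
  simp only [Set.inter_assoc, Set.inter_left_comm {ω | A ω = 1} S, hindep u,
    integral_sub hY1.integrableOn hYm1.integrableOn]
  field_simp
  linear_combination h1 + h0 + (∫ ω in {ω | U ω = u}, Ym1 ω ∂μ) * hcount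

end

theorem stmt_7_general {Ω 𝒰 : Type*} [MeasurableSpace Ω] [Fintype 𝒰]
    (μ : Measure Ω) [IsProbabilityMeasure μ]
    (P : Set Ω → ℝ) (hP : ∀ s, P s = (μ s).toReal)
    (Z A : Ω → ℝ) (hZmeas : Measurable Z) (hAmeas : Measurable A)
    (hApm : ∀ ω, A ω = 1 ∨ A ω = -1)
    (U : Ω → 𝒰) (hUmeas : ∀ u, MeasurableSet {ω | U ω = u})
    (Y1 Ym1 Y : Ω → ℝ) (hY1 : Integrable Y1 μ) (hYm1 : Integrable Ym1 μ)
    -- consistency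
    (hY : ∀ ω, Y ω = Y1 ω * (if A ω = 1 then 1 else 0) + Ym1 ω * (if A ω = -1 then 1 else 0))
    -- positivity
    (hZUpos : ∀ (z : ℝ) (u : 𝒰), (z = 1 ∨ z = -1) → 0 < P {ω | Z ω = z ∧ U ω = u})
    -- IV independence: Z ⟂ U
    (hindep : ∀ (z : ℝ) (u : 𝒰),
      P {ω | Z ω = z ∧ U ω = u} = P {ω | Z ω = z} * P {ω | U ω = u})
    -- latent unconfoundedness: (Y₁,Y₋₁) ⟂ (Z,A) | U, elementwise on events
    (hlatent : ∀ (B : Set (ℝ × ℝ)), MeasurableSet B → ∀ (z a : ℝ) (u : 𝒰),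
      P {ω | (Y1 ω, Ym1 ω) ∈ B ∧ Z ω = z ∧ A ω = a ∧ U ω = u} * P {ω | U ω = u} =
        P {ω | (Y1 ω, Ym1 ω) ∈ B ∧ U ω = u} * P {ω | Z ω = z ∧ A ω = a ∧ U ω = u})
    -- γ̃ and δ̃
    (γt δt : 𝒰 → ℝ)
    (hγt : ∀ u, γt u = (∫ ω in {ω | U ω = u}, (Y1 ω - Ym1 ω) ∂μ) / P {ω | U ω = u})
    (hδt : ∀ u, δt u =
      P {ω | A ω = 1 ∧ Z ω = 1 ∧ U ω = u} / P {ω | Z ω = 1 ∧ U ω = u} -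
        P {ω | A ω = 1 ∧ Z ω = -1 ∧ U ω = u} / P {ω | Z ω = -1 ∧ U ω = u}) :
    (∫ ω in {ω | Z ω = 1}, Y ω ∂μ) / P {ω | Z ω = 1} -
      (∫ ω in {ω | Z ω = -1}, Y ω ∂μ) / P {ω | Z ω = -1} =
      ∑ u : 𝒰, γt u * δt u * P {ω | U ω = u} := by
  obtain rfl : P = μ.real := funext hP
  have hsplit (z : ℝ) (hz : z = 1 ∨ z = -1) :
      (∫ ω in {ω | Z ω = z}, Y ω ∂μ) / μ.real {ω | Z ω = z} =
        ∑ u, (∫ ω in {ω | U ω = u}, Ym1 ω ∂μ + γt u *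
          (μ.real {ω | A ω = 1 ∧ Z ω = z ∧ U ω = u} / μ.real {ω | Z ω = z ∧ U ω = u}) *
          μ.real {ω | U ω = u}) := by
    simp only [hγt]
    exact setIntegral_div_measureReal_eq_sum_of_latent_unconfoundedness hAmeas hApm hUmeas hY1
      hYm1 hY (hZmeas (measurableSet_singleton z)) (fun u => hZUpos z u hz) (hindep z)
      fun B hB => hlatent B hB z
  rw [hsplit 1 (Or.inl rfl), hsplit (-1) (Or.inr rfl), ← sum_sub_distrib]
  refine sum_congr rfl fun u _ => ?_
  rw [hδt]
  ring

/-- Wald decomposition: E[Y|Z=1] − E[Y|Z=−1] = E[γ̃(U) δ̃(U)], with U finitely valued,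
Z ⟂ U, and (Y₁,Y₋₁) ⟂ (Z,A) | U (stated elementwise on events), and consistency. -/
theorem stmt_7 {Ω 𝒰 : Type*} [MeasurableSpace Ω] [Fintype 𝒰]
    (μ : Measure Ω) [IsProbabilityMeasure μ]
    (P : Set Ω → ℝ) (hP : ∀ s, P s = (μ s).toReal)
    (Z A : Ω → ℝ) (hZmeas : Measurable Z) (hAmeas : Measurable A)
    (hZpm : ∀ ω, Z ω = 1 ∨ Z ω = -1) (hApm : ∀ ω, A ω = 1 ∨ A ω = -1)
    (U : Ω → 𝒰) (hUmeas : ∀ u, MeasurableSet {ω | U ω = u})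
    (Y1 Ym1 Y : Ω → ℝ) (hY1 : Integrable Y1 μ) (hYm1 : Integrable Ym1 μ)
    -- consistency
    (hY : ∀ ω, Y ω = Y1 ω * (if A ω = 1 then 1 else 0) + Ym1 ω * (if A ω = -1 then 1 else 0))
    -- positivity
    (hZpos : ∀ z : ℝ, (z = 1 ∨ z = -1) → 0 < P {ω | Z ω = z})
    (hZUpos : ∀ (z : ℝ) (u : 𝒰), (z = 1 ∨ z = -1) → 0 < P {ω | Z ω = z ∧ U ω = u})
    -- IV independence: Z ⟂ U
    (hindep : ∀ (z : ℝ) (u : 𝒰),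
      P {ω | Z ω = z ∧ U ω = u} = P {ω | Z ω = z} * P {ω | U ω = u})
    -- latent unconfoundedness: (Y₁,Y₋₁) ⟂ (Z,A) | U, elementwise on events
    (hlatent : ∀ (B : Set (ℝ × ℝ)), MeasurableSet B → ∀ (z a : ℝ) (u : 𝒰),
      P {ω | (Y1 ω, Ym1 ω) ∈ B ∧ Z ω = z ∧ A ω = a ∧ U ω = u} * P {ω | U ω = u} =
        P {ω | (Y1 ω, Ym1 ω) ∈ B ∧ U ω = u} * P {ω | Z ω = z ∧ A ω = a ∧ U ω = u})
    -- γ̃ and δ̃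
    (γt δt : 𝒰 → ℝ)
    (hγt : ∀ u, γt u = (∫ ω in {ω | U ω = u}, (Y1 ω - Ym1 ω) ∂μ) / P {ω | U ω = u})
    (hδt : ∀ u, δt u =
      P {ω | A ω = 1 ∧ Z ω = 1 ∧ U ω = u} / P {ω | Z ω = 1 ∧ U ω = u} -
        P {ω | A ω = 1 ∧ Z ω = -1 ∧ U ω = u} / P {ω | Z ω = -1 ∧ U ω = u}) :
    (∫ ω in {ω | Z ω = 1}, Y ω ∂μ) / P {ω | Z ω = 1} -
      (∫ ω in {ω | Z ω = -1}, Y ω ∂μ) / P {ω | Z ω = -1} =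
      ∑ u : 𝒰, γt u * δt u * P {ω | U ω = u} :=
  stmt_7_general μ P hP Z A hZmeas hAmeas hApm U hUmeas Y1 Ym1 Y hY1 hYm1 hY hZUpos hindep hlatent
    γt δt hγt hδt
end

section
/- Under the setup of the Wald decomposition (Z ⟂ U, latent unconfoundedness, consistency, Z ∈ {−1,1}, δ := P(A=1|Z=1) − P(A=1|Z=−1) ≠ 0, γ := E[Y₁ − Y₋₁] ≠ 0): the Wald ratio (E[Y|Z=1] − E[Y|Z=−1])/δ has the same sign as γ if and only if E[(γ̃(U)/γ)·(δ̃(U)/δ)] > 0, where γ̃(U) = E[Y₁−Y₋₁|U] and δ̃(U) = P(A=1|Z=1,U) − P(A=1|Z=−1,U). -/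
/-!
Condition on the latent confounder `U`. By latent unconfoundedness, on the event
`{Z = z, A = a, U = u}` the potential outcome `Y_a` has the same mean as on `{U = u}`, so with
`Y = Y₋₁ + 1{A = 1} (Y₁ - Y₋₁)`:
`E[Y; Z = z, U = u] = γ̃(u) P(Z = z, A = 1, U = u) + E[Y₋₁ | U = u] P(Z = z, U = u)`.
Summing over `u` and using `Z ⟂ U` gives
`E[Y | Z = z] = ∑ᵤ γ̃(u) P(A = 1 | Z = z, U = u) P(U = u) + E[Y₋₁]`,
so the Wald numerator is `E[γ̃(U) δ̃(U)]`, and the Wald ratio divided by `γ` is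
`E[(γ̃(U)/γ)(δ̃(U)/δ)]`. Finally `sign x = sign γ` iff `x / γ > 0`.
-/

open MeasureTheory

lemma Real.sign_eq_sign_iff_pos_div {x y : ℝ} (hy : y ≠ 0) :
    Real.sign x = Real.sign y ↔ 0 < x / y := by
  rcases lt_trichotomy x 0 with hx | rfl | hx <;> rcases hy.lt_or_gt with hy | hy <;>
    simp [Real.sign_of_neg, Real.sign_of_pos, Real.sign_zero, div_pos_iff, *] <;>
    norm_num [hx.le, hy.le]

lemma setIntegral_eq_sum_inter_fiber {Ω ι E : Type*} [MeasurableSpace Ω] [Fintype ι]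
    [NormedAddCommGroup E] [NormedSpace ℝ E] {μ : Measure Ω} {U : Ω → ι}
    (hU : ∀ u, MeasurableSet {ω | U ω = u}) {f : Ω → E} (hf : Integrable f μ)
    {s : Set Ω} (hs : MeasurableSet s) :
    ∫ ω in s, f ω ∂μ = ∑ u, ∫ ω in s ∩ {ω | U ω = u}, f ω ∂μ := by
  rw [← integral_iUnion_fintype (fun u => hs.inter (hU u)) ?_ fun _ => hf.integrableOn]
  · congr; ext ω; simp
  · exact fun u v huv => Set.disjoint_left.2 fun ω h1 h2 => huv (h1.2.symm.trans h2.2)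

/-- `hlaw` says that `V` has the same law conditionally on `E` and conditionally on `F`. -/
lemma setIntegral_comp_mul_measureReal_comm {Ω β : Type*} [MeasurableSpace Ω]
    [MeasurableSpace β] {μ : Measure Ω} [IsFiniteMeasure μ] {V : Ω → β} (hV : AEMeasurable V μ)
    {E F : Set Ω} (hE : MeasurableSet E) (hF : MeasurableSet F)
    (hlaw : ∀ B, MeasurableSet B →
      μ.real (V ⁻¹' B ∩ E) * μ.real F = μ.real (V ⁻¹' B ∩ F) * μ.real E)
    {g : β → ℝ} (hg : Measurable g) :
    (∫ ω in E, g (V ω) ∂μ) * μ.real F = (∫ ω in F, g (V ω) ∂μ) * μ.real E := by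
  have hmap : μ F • (μ.restrict E).map V = μ E • (μ.restrict F).map V := by
    ext B hB
    simp only [Measure.smul_apply, smul_eq_mul, Measure.map_apply_of_aemeasurable hV.restrict hB,
      Measure.restrict_apply' hE, Measure.restrict_apply' hF]
    rw [mul_comm, mul_comm (μ E)]
    refine (ENNReal.toReal_eq_toReal_iff' (by finiteness) (by finiteness)).1 ?_
    rw [ENNReal.toReal_mul, ENNReal.toReal_mul]
    exact hlaw B hB
  have h := congrArg (fun ν => ∫ p, g p ∂ν) hmap
  simp only [integral_smul_measure, integral_map hV.restrict hg.aestronglyMeasurable,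
    smul_eq_mul] at h
  rwa [mul_comm, mul_comm (∫ _ in F, _ ∂μ)]

lemma integrable_of_consistency {Ω : Type*} [MeasurableSpace Ω] {μ : Measure Ω}
    {A Y1 Ym1 Y : Ω → ℝ} (hA : Measurable A) (hY1 : Integrable Y1 μ) (hYm1 : Integrable Ym1 μ)
    (hY : ∀ ω, Y ω = Y1 ω * (if A ω = 1 then 1 else 0) + Ym1 ω * (if A ω = -1 then 1 else 0)) :
    Integrable Y μ := by
  have hind : Y = {ω | A ω = 1}.indicator Y1 + {ω | A ω = -1}.indicator Ym1 :=
    funext fun ω => by simp [hY, Set.indicator_apply]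
  rw [hind]
  exact (hY1.indicator (hA (measurableSet_singleton 1))).add
    (hYm1.indicator (hA (measurableSet_singleton (-1))))

noncomputable def condMean {Ω 𝒰 : Type*} [MeasurableSpace Ω] (μ : Measure Ω) (U : Ω → 𝒰)
    (f : Ω → ℝ) (u : 𝒰) : ℝ :=
  (∫ ω in {ω | U ω = u}, f ω ∂μ) / μ.real {ω | U ω = u}

section WaldDecomposition

variable {Ω 𝒰 : Type*} [MeasurableSpace Ω] {μ : Measure Ω} [IsFiniteMeasure μ]
  {Z A : Ω → ℝ} {U : Ω → 𝒰} {Y1 Ym1 Y : Ω → ℝ}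

lemma setIntegral_instrument_fiber_eq (hZ : Measurable Z) (hA : Measurable A)
    (hU : ∀ u, MeasurableSet {ω | U ω = u}) (hApm : ∀ ω, A ω = 1 ∨ A ω = -1)
    (hY1 : Integrable Y1 μ) (hYm1 : Integrable Ym1 μ)
    (hY : ∀ ω, Y ω = Y1 ω * (if A ω = 1 then 1 else 0) + Ym1 ω * (if A ω = -1 then 1 else 0))
    {z : ℝ} {u : 𝒰} (hu : μ.real {ω | U ω = u} ≠ 0)
    (hlatent : ∀ (a : ℝ) (B : Set (ℝ × ℝ)), MeasurableSet B →
      μ.real {ω | (Y1 ω, Ym1 ω) ∈ B ∧ Z ω = z ∧ A ω = a ∧ U ω = u} * μ.real {ω | U ω = u} =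
        μ.real {ω | (Y1 ω, Ym1 ω) ∈ B ∧ U ω = u} * μ.real {ω | Z ω = z ∧ A ω = a ∧ U ω = u}) :
    ∫ ω in {ω | Z ω = z ∧ U ω = u}, Y ω ∂μ =
      condMean μ U (fun ω => Y1 ω - Ym1 ω) u * μ.real {ω | Z ω = z ∧ A ω = 1 ∧ U ω = u} +
        condMean μ U Ym1 u * μ.real {ω | Z ω = z ∧ U ω = u} := by
  set S : ℝ → Set Ω := fun a => {ω | Z ω = z ∧ A ω = a ∧ U ω = u}
  have hS a : MeasurableSet (S a) :=
    (hZ (measurableSet_singleton z)).inter ((hA (measurableSet_singleton a)).inter (hU u))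
  have hsplit : {ω | Z ω = z ∧ U ω = u} = S 1 ∪ S (-1) := by
    ext ω; rcases hApm ω with h | h <;> norm_num [S, h]
  have hdisj : Disjoint (S 1) (S (-1)) :=
    Set.disjoint_left.2 fun ω h1 h2 => by linarith [h1.2.1, h2.2.1]
  have harm a (g : ℝ × ℝ → ℝ) (hg : Measurable g) (hYg : ∀ ω ∈ S a, Y ω = g (Y1 ω, Ym1 ω)) :
      ∫ ω in S a, Y ω ∂μ = condMean μ U (fun ω => g (Y1 ω, Ym1 ω)) u * μ.real (S a) := by
    rw [setIntegral_congr_fun (hS a) hYg, condMean, div_mul_eq_mul_div, eq_div_iff hu]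
    exact setIntegral_comp_mul_measureReal_comm (hY1.aemeasurable.prodMk hYm1.aemeasurable)
      (hS a) (hU u) (hlatent a) hg
  have htreated := harm 1 Prod.fst measurable_fst fun ω hω => by norm_num [hY, hω.2.1]
  have hcontrol := harm (-1) Prod.snd measurable_snd fun ω hω => by norm_num [hY, hω.2.1]
  have hYint := integrable_of_consistency hA hY1 hYm1 hY
  rw [hsplit, setIntegral_union hdisj (hS _) hYint.integrableOn hYint.integrableOn,
    measureReal_union hdisj (hS _), htreated, hcontrol]
  simp only [condMean, integral_sub hY1.integrableOn hYm1.integrableOn]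
  ring

lemma setIntegral_instrument_div_eq [Fintype 𝒰] (hZ : Measurable Z) (hA : Measurable A)
    (hU : ∀ u, MeasurableSet {ω | U ω = u}) (hApm : ∀ ω, A ω = 1 ∨ A ω = -1)
    (hY1 : Integrable Y1 μ) (hYm1 : Integrable Ym1 μ)
    (hY : ∀ ω, Y ω = Y1 ω * (if A ω = 1 then 1 else 0) + Ym1 ω * (if A ω = -1 then 1 else 0))
    {z : ℝ} (hz : μ.real {ω | Z ω = z} ≠ 0) (hu : ∀ u, μ.real {ω | U ω = u} ≠ 0)
    (hindep : ∀ u,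
      μ.real {ω | Z ω = z ∧ U ω = u} = μ.real {ω | Z ω = z} * μ.real {ω | U ω = u})
    (hlatent : ∀ (u : 𝒰) (a : ℝ) (B : Set (ℝ × ℝ)), MeasurableSet B →
      μ.real {ω | (Y1 ω, Ym1 ω) ∈ B ∧ Z ω = z ∧ A ω = a ∧ U ω = u} * μ.real {ω | U ω = u} =
        μ.real {ω | (Y1 ω, Ym1 ω) ∈ B ∧ U ω = u} * μ.real {ω | Z ω = z ∧ A ω = a ∧ U ω = u}) :
    (∫ ω in {ω | Z ω = z}, Y ω ∂μ) / μ.real {ω | Z ω = z} =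
      ∑ u, condMean μ U (fun ω => Y1 ω - Ym1 ω) u *
          (μ.real {ω | A ω = 1 ∧ Z ω = z ∧ U ω = u} / μ.real {ω | Z ω = z ∧ U ω = u}) *
          μ.real {ω | U ω = u} +
        ∫ ω, Ym1 ω ∂μ := by
  have hYm1_eq : ∫ ω, Ym1 ω ∂μ = ∑ u, condMean μ U Ym1 u * μ.real {ω | U ω = u} := by
    rw [← setIntegral_univ, setIntegral_eq_sum_inter_fiber hU hYm1 MeasurableSet.univ]
    refine Finset.sum_congr rfl fun u _ => ?_
    rw [Set.univ_inter, condMean, div_mul_cancel₀ _ (hu u)]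
  rw [setIntegral_eq_sum_inter_fiber (s := {ω | Z ω = z}) hU
    (integrable_of_consistency hA hY1 hYm1 hY) (hZ (measurableSet_singleton z)), hYm1_eq,
    ← Finset.sum_add_distrib, Finset.sum_div]
  refine Finset.sum_congr rfl fun u _ => ?_
  have hswap : {ω | A ω = 1 ∧ Z ω = z ∧ U ω = u} = {ω | Z ω = z ∧ A ω = 1 ∧ U ω = u} :=
    Set.ext fun ω => and_left_comm
  have hu_ne := hu u
  rw [← Set.ofPred_and, setIntegral_instrument_fiber_eq hZ hA hU hApm hY1 hYm1 hY hu_ne (hlatent u),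
    hswap, hindep u]
  field_simp

end WaldDecomposition

theorem stmt_8_general {Ω 𝒰 : Type*} [MeasurableSpace Ω] [Fintype 𝒰]
    (μ : Measure Ω) [IsProbabilityMeasure μ]
    (P : Set Ω → ℝ) (hP : ∀ s, P s = (μ s).toReal)
    (Z A : Ω → ℝ) (hZmeas : Measurable Z) (hAmeas : Measurable A)
    (hApm : ∀ ω, A ω = 1 ∨ A ω = -1)
    (U : Ω → 𝒰) (hUmeas : ∀ u, MeasurableSet {ω | U ω = u})
    (Y1 Ym1 Y : Ω → ℝ) (hY1 : Integrable Y1 μ) (hYm1 : Integrable Ym1 μ)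
    -- consistency
    (hY : ∀ ω, Y ω = Y1 ω * (if A ω = 1 then 1 else 0) + Ym1 ω * (if A ω = -1 then 1 else 0))
    -- positivity
    (hZpos : ∀ z : ℝ, (z = 1 ∨ z = -1) → 0 < P {ω | Z ω = z})
    (hZUpos : ∀ (z : ℝ) (u : 𝒰), (z = 1 ∨ z = -1) → 0 < P {ω | Z ω = z ∧ U ω = u})
    -- IV independence: Z ⟂ U
    (hindep : ∀ (z : ℝ) (u : 𝒰),
      P {ω | Z ω = z ∧ U ω = u} = P {ω | Z ω = z} * P {ω | U ω = u})
    -- latent unconfoundedness: (Y₁,Y₋₁) ⟂ (Z,A) | U, elementwise on events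
    (hlatent : ∀ (B : Set (ℝ × ℝ)), MeasurableSet B → ∀ (z a : ℝ) (u : 𝒰),
      P {ω | (Y1 ω, Ym1 ω) ∈ B ∧ Z ω = z ∧ A ω = a ∧ U ω = u} * P {ω | U ω = u} =
        P {ω | (Y1 ω, Ym1 ω) ∈ B ∧ U ω = u} * P {ω | Z ω = z ∧ A ω = a ∧ U ω = u})
    -- γ̃, δ̃, γ, δ
    (γt δt : 𝒰 → ℝ)
    (hγt : ∀ u, γt u = (∫ ω in {ω | U ω = u}, (Y1 ω - Ym1 ω) ∂μ) / P {ω | U ω = u})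
    (hδt : ∀ u, δt u =
      P {ω | A ω = 1 ∧ Z ω = 1 ∧ U ω = u} / P {ω | Z ω = 1 ∧ U ω = u} -
        P {ω | A ω = 1 ∧ Z ω = -1 ∧ U ω = u} / P {ω | Z ω = -1 ∧ U ω = u})
    (γ δ : ℝ)
    (hγ0 : γ ≠ 0) :
    Real.sign (((∫ ω in {ω | Z ω = 1}, Y ω ∂μ) / P {ω | Z ω = 1} -
        (∫ ω in {ω | Z ω = -1}, Y ω ∂μ) / P {ω | Z ω = -1}) / δ) = Real.sign γ ↔
      0 < ∑ u : 𝒰, (γt u / γ) * (δt u / δ) * P {ω | U ω = u} := by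
  obtain rfl : P = μ.real := funext hP
  obtain rfl : γt = condMean μ U (fun ω => Y1 ω - Ym1 ω) := funext hγt
  have hU0 u : μ.real {ω | U ω = u} ≠ 0 :=
    right_ne_zero_of_mul (hindep 1 u ▸ (hZUpos 1 u (Or.inl rfl)).ne')
  have hmean z (hz : z = 1 ∨ z = -1) :=
    setIntegral_instrument_div_eq hZmeas hAmeas hUmeas hApm hY1 hYm1 hY (hZpos z hz).ne' hU0
      (hindep z) fun u a B hB => hlatent B hB z a u
  have hwald : (∫ ω in {ω | Z ω = 1}, Y ω ∂μ) / μ.real {ω | Z ω = 1} -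
      (∫ ω in {ω | Z ω = -1}, Y ω ∂μ) / μ.real {ω | Z ω = -1} =
      ∑ u, condMean μ U (fun ω => Y1 ω - Ym1 ω) u * δt u * μ.real {ω | U ω = u} := by
    rw [hmean 1 (Or.inl rfl), hmean (-1) (Or.inr rfl), add_sub_add_right_eq_sub,
      ← Finset.sum_sub_distrib]
    exact Finset.sum_congr rfl fun u _ => by rw [hδt u]; ring
  rw [hwald, Real.sign_eq_sign_iff_pos_div hγ0, Finset.sum_div, Finset.sum_div]
  exact iff_of_eq (congrArg _ (Finset.sum_congr rfl fun u _ => by ring))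

/-- Theorem 1 (L suppressed): the Wald ratio has the same sign as γ = E[Y₁−Y₋₁] iff
E[(γ̃(U)/γ)(δ̃(U)/δ)] > 0, under IV independence, latent unconfoundedness and consistency. -/
theorem stmt_8 {Ω 𝒰 : Type*} [MeasurableSpace Ω] [Fintype 𝒰]
    (μ : Measure Ω) [IsProbabilityMeasure μ]
    (P : Set Ω → ℝ) (hP : ∀ s, P s = (μ s).toReal)
    (Z A : Ω → ℝ) (hZmeas : Measurable Z) (hAmeas : Measurable A)
    (hZpm : ∀ ω, Z ω = 1 ∨ Z ω = -1) (hApm : ∀ ω, A ω = 1 ∨ A ω = -1)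
    (U : Ω → 𝒰) (hUmeas : ∀ u, MeasurableSet {ω | U ω = u})
    (Y1 Ym1 Y : Ω → ℝ) (hY1 : Integrable Y1 μ) (hYm1 : Integrable Ym1 μ)
    -- consistency
    (hY : ∀ ω, Y ω = Y1 ω * (if A ω = 1 then 1 else 0) + Ym1 ω * (if A ω = -1 then 1 else 0))
    -- positivity
    (hZpos : ∀ z : ℝ, (z = 1 ∨ z = -1) → 0 < P {ω | Z ω = z})
    (hZUpos : ∀ (z : ℝ) (u : 𝒰), (z = 1 ∨ z = -1) → 0 < P {ω | Z ω = z ∧ U ω = u})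
    -- IV independence: Z ⟂ U
    (hindep : ∀ (z : ℝ) (u : 𝒰),
      P {ω | Z ω = z ∧ U ω = u} = P {ω | Z ω = z} * P {ω | U ω = u})
    -- latent unconfoundedness: (Y₁,Y₋₁) ⟂ (Z,A) | U, elementwise on events
    (hlatent : ∀ (B : Set (ℝ × ℝ)), MeasurableSet B → ∀ (z a : ℝ) (u : 𝒰),
      P {ω | (Y1 ω, Ym1 ω) ∈ B ∧ Z ω = z ∧ A ω = a ∧ U ω = u} * P {ω | U ω = u} =
        P {ω | (Y1 ω, Ym1 ω) ∈ B ∧ U ω = u} * P {ω | Z ω = z ∧ A ω = a ∧ U ω = u})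
    -- γ̃, δ̃, γ, δ
    (γt δt : 𝒰 → ℝ)
    (hγt : ∀ u, γt u = (∫ ω in {ω | U ω = u}, (Y1 ω - Ym1 ω) ∂μ) / P {ω | U ω = u})
    (hδt : ∀ u, δt u =
      P {ω | A ω = 1 ∧ Z ω = 1 ∧ U ω = u} / P {ω | Z ω = 1 ∧ U ω = u} -
        P {ω | A ω = 1 ∧ Z ω = -1 ∧ U ω = u} / P {ω | Z ω = -1 ∧ U ω = u})
    (γ δ : ℝ) (hγ : γ = ∫ ω, (Y1 ω - Ym1 ω) ∂μ)
    (hδ : δ = P {ω | A ω = 1 ∧ Z ω = 1} / P {ω | Z ω = 1} -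
        P {ω | A ω = 1 ∧ Z ω = -1} / P {ω | Z ω = -1})
    (hγ0 : γ ≠ 0) (hδ0 : δ ≠ 0) :
    Real.sign (((∫ ω in {ω | Z ω = 1}, Y ω ∂μ) / P {ω | Z ω = 1} -
        (∫ ω in {ω | Z ω = -1}, Y ω ∂μ) / P {ω | Z ω = -1}) / δ) = Real.sign γ ↔
      0 < ∑ u : 𝒰, (γt u / γ) * (δt u / δ) * P {ω | U ω = u} :=
  stmt_8_general μ P hP Z A hZmeas hAmeas hApm U hUmeas Y1 Ym1 Y hY1 hYm1 hY hZpos hZUpos hindep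
    hlatent γt δt hγt hδt γ δ hγ0
end

section
/- There exist integrable random variables γ̃, δ̃ (on some probability space) with γ = E[γ̃] ≠ 0 and δ = E[δ̃] ≠ 0 such that E[(γ̃/γ)(δ̃/δ)] > 0 but neither Cov(γ̃, δ̃) = 0 holds nor does γ̃ (or δ̃) have almost surely constant sign. -/
/-!
Take `γ̃ = δ̃ = X`. Then `E[(X/EX)²] = (Var X + (EX)²)/(EX)² > 0` for every square-integrable `X`
with `EX ≠ 0`, while `Cov(X, X) = Var X` vanishes only if `X` is a.s. constant, hence of a.s.
constant sign. So any such `X` that changes sign is a witness, e.g. `X = 3` or `X = -1` with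
probability `1/2` each.
-/

open MeasureTheory ProbabilityTheory

section Moments

variable {Ω : Type*} [MeasurableSpace Ω] {μ : Measure Ω} [IsProbabilityMeasure μ] {X : Ω → ℝ}

lemma variance_ne_zero_of_not_ae_sign (hX : MemLp X 2 μ)
    (hsign : ¬ ((∀ᵐ ω ∂μ, 0 ≤ X ω) ∨ (∀ᵐ ω ∂μ, X ω ≤ 0))) : Var[X; μ] ≠ 0 := by
  intro hvar
  have hconst := ae_eq_integral_of_variance_eq_zero hX hvar
  rcases le_total 0 μ[X] with hmean | hmean
  · exact hsign (.inl (hconst.mono fun ω hω => hω ▸ hmean))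
  · exact hsign (.inr (hconst.mono fun ω hω => hω ▸ hmean))

lemma integral_mul_self_eq_variance_add (hX : MemLp X 2 μ) :
    ∫ ω, X ω * X ω ∂μ = Var[X; μ] + μ[X] * μ[X] := by
  rw [← covariance_self hX.aemeasurable, covariance_eq_sub hX hX]
  simp only [Pi.mul_apply]
  ring

lemma integral_div_mean_mul_self_pos (hX : MemLp X 2 μ) (hmean : μ[X] ≠ 0) :
    0 < ∫ ω, (X ω / μ[X]) * (X ω / μ[X]) ∂μ := by
  simp_rw [div_mul_div_comm]
  rw [integral_div, integral_mul_self_eq_variance_add hX]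
  have hmean_sq : 0 < μ[X] * μ[X] := mul_self_pos.mpr hmean
  exact div_pos (add_pos_of_nonneg_of_pos (variance_nonneg X μ) hmean_sq) hmean_sq

end Moments

section UniformOnUniv

variable {Ω : Type*} [Fintype Ω] [MeasurableSpace Ω] [MeasurableSingletonClass Ω]

lemma uniformOn_univ_singleton (x : Ω) :
    uniformOn (Set.univ : Set Ω) {x} = (Fintype.card Ω : ENNReal)⁻¹ := by
  simp [uniformOn_univ]

lemma ae_uniformOn_univ_iff {p : Ω → Prop} :
    (∀ᵐ x ∂uniformOn (Set.univ : Set Ω), p x) ↔ ∀ x, p x := by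
  simp [ae_iff_of_countable, uniformOn_univ_singleton]

lemma integral_uniformOn_univ (f : Ω → ℝ) :
    ∫ x, f x ∂uniformOn (Set.univ : Set Ω) = (∑ x, f x) / Fintype.card Ω := by
  rw [integral_fintype Integrable.of_finite]
  simp [measureReal_def, uniformOn_univ_singleton, div_eq_inv_mul, Finset.mul_sum]

end UniformOnUniv

def threeOrNegOne : Bool → ℝ := fun b => if b then 3 else -1

lemma integral_threeOrNegOne : ∫ b, threeOrNegOne b ∂uniformOn Set.univ = 1 := by
  rw [integral_uniformOn_univ]
  norm_num [threeOrNegOne]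

lemma threeOrNegOne_not_ae_sign :
    ¬ ((∀ᵐ b ∂uniformOn Set.univ, 0 ≤ threeOrNegOne b) ∨
      (∀ᵐ b ∂uniformOn Set.univ, threeOrNegOne b ≤ 0)) := by
  simp only [ae_uniformOn_univ_iff]
  rintro (h | h)
  · exact absurd (h false) (by norm_num [threeOrNegOne])
  · exact absurd (h true) (by norm_num [threeOrNegOne])

/-- Condition (4) is strictly weaker: there exist γ̃, δ̃ with E[(γ̃/γ)(δ̃/δ)] > 0
but Cov(γ̃,δ̃) ≠ 0 and γ̃ without a.s. constant sign. -/
theorem stmt_11 :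
    ∃ (Ω : Type) (_ : MeasurableSpace Ω) (μ : Measure Ω) (_ : IsProbabilityMeasure μ)
      (γt δt : Ω → ℝ),
      Integrable γt μ ∧ Integrable δt μ ∧ Integrable (fun ω => γt ω * δt ω) μ ∧
      (∫ ω, γt ω ∂μ) ≠ 0 ∧ (∫ ω, δt ω ∂μ) ≠ 0 ∧
      (0 < ∫ ω, (γt ω / ∫ ω', γt ω' ∂μ) * (δt ω / ∫ ω', δt ω' ∂μ) ∂μ) ∧
      ((∫ ω, γt ω * δt ω ∂μ) - (∫ ω, γt ω ∂μ) * (∫ ω, δt ω ∂μ) ≠ 0) ∧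
      ¬ ((∀ᵐ ω ∂μ, 0 ≤ γt ω) ∨ (∀ᵐ ω ∂μ, γt ω ≤ 0)) := by
  set μ : Measure Bool := uniformOn Set.univ
  have hX : MemLp threeOrNegOne 2 μ := .of_discrete
  have hmean : μ[threeOrNegOne] ≠ 0 := by rw [integral_threeOrNegOne]; exact one_ne_zero
  have hcov : ∫ b, threeOrNegOne b * threeOrNegOne b ∂μ - μ[threeOrNegOne] * μ[threeOrNegOne]
      ≠ 0 := by
    rw [integral_mul_self_eq_variance_add hX, add_sub_cancel_right]
    exact variance_ne_zero_of_not_ae_sign hX threeOrNegOne_not_ae_sign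
  exact ⟨Bool, inferInstance, μ, inferInstance, threeOrNegOne, threeOrNegOne,
    .of_finite, .of_finite, .of_finite, hmean, hmean, integral_div_mean_mul_self_pos hX hmean,
    hcov, threeOrNegOne_not_ae_sign⟩
end

section
/- There exists a probability space and integrable random variables γ̃, δ̃ with E[γ̃] ≠ 0, E[δ̃] ≠ 0 such that Cov(γ̃, δ̃) = 0 while γ̃ takes both strictly positive and strictly negative values with positive probability; and conversely there exist γ̃', δ̃' with γ̃' ≥ 0 a.s., δ̃' ≥ 0 a.s., E[γ̃'] > 0, E[δ̃'] > 0, and Cov(γ̃', δ̃') ≠ 0. -/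
/-!
A constant `δ̃` is uncorrelated with every `γ̃`, in particular with one that changes sign; and an
indicator `1_A` with `0 < P(A) < 1` is nonnegative yet has variance `P(A) (1 - P(A)) ≠ 0`.
Both examples live on a fair coin.
-/

open MeasureTheory

section Covariance

variable {Ω : Type*} [MeasurableSpace Ω] (μ : Measure Ω)

lemma integral_mul_const_sub_integral_mul_integral_const [IsProbabilityMeasure μ]
    (f : Ω → ℝ) (c : ℝ) :
    (∫ ω, f ω * c ∂μ) - (∫ ω, f ω ∂μ) * (∫ _, c ∂μ) = 0 := by
  simp [integral_mul_const]

lemma integral_indicator_one_mul_self_sub {A : Set Ω} (hA : MeasurableSet A) :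
    (∫ ω, A.indicator 1 ω * A.indicator 1 ω ∂μ)
      - (∫ ω, A.indicator (1 : Ω → ℝ) ω ∂μ) * (∫ ω, A.indicator 1 ω ∂μ)
      = μ.real A * (1 - μ.real A) := by
  have h_idem : (fun ω => A.indicator (1 : Ω → ℝ) ω * A.indicator 1 ω) = A.indicator 1 := by
    ext ω
    by_cases hω : ω ∈ A <;> simp [hω]
  rw [h_idem, integral_indicator_one hA]
  ring

end Covariance

noncomputable def fairCoin : Measure Bool := (PMF.uniformOfFintype Bool).toMeasure

instance : IsProbabilityMeasure fairCoin := by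
  unfold fairCoin
  infer_instance

lemma fairCoin_singleton (b : Bool) : fairCoin {b} = 2⁻¹ := by
  simp [fairCoin]

lemma fairCoin_real_singleton (b : Bool) : fairCoin.real {b} = 1 / 2 := by
  simp [measureReal_def, fairCoin_singleton]

lemma fairCoin_pos_of_mem {s : Set Bool} {b : Bool} (hb : b ∈ s) : 0 < fairCoin s :=
  calc 0 < fairCoin {b} := by simp [fairCoin_singleton]
    _ ≤ fairCoin s := measure_mono (Set.singleton_subset_iff.2 hb)

lemma integral_fairCoin (f : Bool → ℝ) : ∫ b, f b ∂fairCoin = (f true + f false) / 2 := by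
  rw [integral_fintype Integrable.of_finite]
  simp only [Fintype.univ_bool, fairCoin_real_singleton, smul_eq_mul, Finset.mem_singleton,
    Bool.true_eq_false, not_false_eq_true, Finset.sum_insert, Finset.sum_singleton]
  ring

/-- Cui–Tchetgen Tchetgen's zero-covariance assumption and Han's constant-sign
assumption do not imply each other. -/
theorem stmt_12 :
    (∃ (Ω : Type) (_ : MeasurableSpace Ω) (μ : Measure Ω) (_ : IsProbabilityMeasure μ)
      (γt δt : Ω → ℝ),
      Integrable γt μ ∧ Integrable δt μ ∧ Integrable (fun ω => γt ω * δt ω) μ ∧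
      (∫ ω, γt ω ∂μ) ≠ 0 ∧ (∫ ω, δt ω ∂μ) ≠ 0 ∧
      (∫ ω, γt ω * δt ω ∂μ) - (∫ ω, γt ω ∂μ) * (∫ ω, δt ω ∂μ) = 0 ∧
      0 < μ {ω | 0 < γt ω} ∧ 0 < μ {ω | γt ω < 0}) ∧
    (∃ (Ω : Type) (_ : MeasurableSpace Ω) (μ : Measure Ω) (_ : IsProbabilityMeasure μ)
      (γt' δt' : Ω → ℝ),
      Integrable γt' μ ∧ Integrable δt' μ ∧ Integrable (fun ω => γt' ω * δt' ω) μ ∧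
      (∀ᵐ ω ∂μ, 0 ≤ γt' ω) ∧ (∀ᵐ ω ∂μ, 0 ≤ δt' ω) ∧
      0 < (∫ ω, γt' ω ∂μ) ∧ 0 < (∫ ω, δt' ω ∂μ) ∧
      (∫ ω, γt' ω * δt' ω ∂μ) - (∫ ω, γt' ω ∂μ) * (∫ ω, δt' ω ∂μ) ≠ 0) := by
  constructor
  · set γ : Bool → ℝ := fun b => if b then 3 else -1
    refine ⟨Bool, inferInstance, fairCoin, inferInstance, γ, fun _ => 1, .of_finite, .of_finite,
      .of_finite, ?_, by rw [integral_const, probReal_univ]; norm_num,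
      integral_mul_const_sub_integral_mul_integral_const _ γ 1, ?_, ?_⟩
    · rw [integral_fairCoin]; norm_num [γ]
    · exact fairCoin_pos_of_mem (b := true) (by norm_num [γ])
    · exact fairCoin_pos_of_mem (b := false) (by norm_num [γ])
  · set A : Set Bool := {true}
    have hA : fairCoin.real A = 1 / 2 := fairCoin_real_singleton true
    have h_mean : ∫ b, A.indicator (1 : Bool → ℝ) b ∂fairCoin = 1 / 2 := by
      rw [integral_indicator_one (measurableSet_singleton true), hA]
    refine ⟨Bool, inferInstance, fairCoin, inferInstance, A.indicator 1, A.indicator 1,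
      .of_finite, .of_finite, .of_finite, .of_forall fun _ => Set.indicator_nonneg (by simp) _,
      .of_forall fun _ => Set.indicator_nonneg (by simp) _, by rw [h_mean]; norm_num,
      by rw [h_mean]; norm_num, ?_⟩
    rw [integral_indicator_one_mul_self_sub fairCoin (measurableSet_singleton true), hA]
    norm_num
end
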